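/- Let $\varphi(z) = z^\alpha (1 + \log^+ z)^\delta$ for $z > 0$, where $\alpha > 0$ and $\delta \ge 0$. Then there exists a constant $D \ge 1$ such that for all $z > 0$, $\frac{1}{D} z^{1/\alpha}(1 + \log^+ z)^{-\delta/\alpha} \le \varphi^{-1}(z) \le D\, z^{1/\alpha}(1 + \log^+ z)^{-\delta/\alpha}$. -/
import Mathlib


noncomputable section

/-- Let `φ(z) = z^α (1 + log⁺ z)^δ` with `α > 0`, `δ ≥ 0`, and let `φinv` be its
inverse on `(0,∞)`. Then there is `D ≥ 1` such that for all `z > 0`,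
`D⁻¹ z^{1/α} (1 + log⁺ z)^{-δ/α} ≤ φ⁻¹(z) ≤ D z^{1/α} (1 + log⁺ z)^{-δ/α}`. -/
theorem stmt8 (α δ : ℝ) (hα : 0 < α) (hδ : 0 ≤ δ) (φinv : ℝ → ℝ)
    (hinv : ∀ z : ℝ, 0 < z →
      0 < φinv z ∧ (φinv z) ^ α * (1 + max (Real.log (φinv z)) 0) ^ δ = z) :
    ∃ D : ℝ, 1 ≤ D ∧ ∀ z : ℝ, 0 < z →
      D⁻¹ * z ^ α⁻¹ * (1 + max (Real.log z) 0) ^ (-δ / α) ≤ φinv z ∧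
      φinv z ≤ D * z ^ α⁻¹ * (1 + max (Real.log z) 0) ^ (-δ / α) := by
  set M : ℝ := max (1 + α + δ) (max 1 α⁻¹) with hM
  have hM1 : (1 : ℝ) ≤ M := le_max_of_le_right (le_max_left _ _)
  have hM0 : (0 : ℝ) < M := lt_of_lt_of_le one_pos hM1
  have hMa : 1 ≤ M * α := by
    have : α⁻¹ ≤ M := le_max_of_le_right (le_max_right _ _)
    calc (1:ℝ) = α⁻¹ * α := by field_simp
    _ ≤ M * α := by nlinarith
  have hMb : 1 + α + δ ≤ M := le_max_left _ _
  have he : 0 ≤ δ / α := div_nonneg hδ hα.le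
  refine ⟨M ^ (δ / α), Real.one_le_rpow hM1 he, ?_⟩
  intro z hz
  obtain ⟨hw, heq⟩ := hinv z hz
  set w := φinv z with hwdef
  set Lw : ℝ := 1 + max (Real.log w) 0 with hLw
  set Lz : ℝ := 1 + max (Real.log z) 0 with hLz
  have hLw1 : 1 ≤ Lw := le_add_of_nonneg_right (le_max_right _ _)
  have hLz1 : 1 ≤ Lz := le_add_of_nonneg_right (le_max_right _ _)
  have hLw0 : 0 < Lw := lt_of_lt_of_le one_pos hLw1
  have hLz0 : 0 < Lz := lt_of_lt_of_le one_pos hLz1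
  -- key comparison: Lz ≤ M * Lw and Lw ≤ M * Lz
  have key : Lz ≤ M * Lw ∧ Lw ≤ M * Lz := by
    rcases le_or_gt w 1 with hw1 | hw1
    · have hlw : Real.log w ≤ 0 := Real.log_nonpos hw.le hw1
      have hLweq : Lw = 1 := by rw [hLw, max_eq_right hlw]; ring
      have hz1 : z ≤ 1 := by
        rw [← heq, hLweq, Real.one_rpow, mul_one]
        exact Real.rpow_le_one hw.le hw1 hα.le
      have hlz : Real.log z ≤ 0 := Real.log_nonpos hz.le hz1
      have hLzeq : Lz = 1 := by rw [hLz, max_eq_right hlz]; ring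
      constructor <;> rw [hLweq, hLzeq] <;> nlinarith
    · have hlw : 0 ≤ Real.log w := Real.log_nonneg hw1.le
      have hLweq : Lw = 1 + Real.log w := by rw [hLw, max_eq_left hlw]
      have hlogz : Real.log z = α * Real.log w + δ * Real.log Lw := by
        rw [← heq, Real.log_mul (by positivity) (by positivity), Real.log_rpow hw,
          Real.log_rpow hLw0]
      have ht0 : 0 ≤ Real.log Lw := Real.log_nonneg hLw1
      have ht1 : Real.log Lw ≤ Real.log w := by
        have := Real.log_le_sub_one_of_pos hLw0
        rw [hLweq] at this ⊢; linarith
      have hlz : 0 ≤ Real.log z := by rw [hlogz]; positivity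
      have hLzeq : Lz = 1 + Real.log z := by rw [hLz, max_eq_left hlz]
      rw [hLzeq, hLweq, hlogz]
      constructor
      · nlinarith [hlw, ht1, hδ, hMb, hα.le]
      · nlinarith [hlw, ht0, hδ, hM1, hMa]
  -- exact identity: w = z ^ α⁻¹ * Lw ^ (-(δ/α))
  have hwz : w = z ^ α⁻¹ * Lw ^ (-(δ / α)) := by
    have h1 : z ^ α⁻¹ = w * Lw ^ (δ / α) := by
      rw [← heq, Real.mul_rpow (by positivity) (by positivity),
        ← Real.rpow_mul hw.le, ← Real.rpow_mul hLw0.le, mul_inv_cancel₀ hα.ne',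
        Real.rpow_one, div_eq_mul_inv]
    rw [h1, mul_assoc, ← Real.rpow_add hLw0, add_neg_cancel, Real.rpow_zero, mul_one]
  have hzp : 0 < z ^ α⁻¹ := Real.rpow_pos_of_pos hz _
  have hMe0 : 0 < M ^ (δ / α) := Real.rpow_pos_of_pos hM0 _
  have hneg : -δ / α = -(δ / α) := by ring
  rw [hneg]
  constructor
  · -- lower bound
    rw [hwz]
    have h2 : (M * Lz) ^ (-(δ / α)) ≤ Lw ^ (-(δ / α)) :=
      Real.rpow_le_rpow_of_nonpos hLw0 key.2 (by linarith)
    rw [Real.mul_rpow hM0.le hLz0.le] at h2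
    have : (M ^ (δ / α))⁻¹ = M ^ (-(δ / α)) := (Real.rpow_neg hM0.le _).symm
    rw [this]
    calc M ^ (-(δ/α)) * z ^ α⁻¹ * Lz ^ (-(δ/α))
        = z ^ α⁻¹ * (M ^ (-(δ/α)) * Lz ^ (-(δ/α))) := by ring
      _ ≤ z ^ α⁻¹ * Lw ^ (-(δ/α)) := by
          exact mul_le_mul_of_nonneg_left h2 hzp.le
  · -- upper bound
    rw [hwz]
    have h2 : (M * Lw) ^ (-(δ / α)) ≤ Lz ^ (-(δ / α)) :=
      Real.rpow_le_rpow_of_nonpos hLz0 key.1 (by linarith)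
    rw [Real.mul_rpow hM0.le hLw0.le] at h2
    have h3 : Lw ^ (-(δ/α)) ≤ M ^ (δ/α) * Lz ^ (-(δ/α)) := by
      have := mul_le_mul_of_nonneg_left h2 hMe0.le
      rwa [← mul_assoc, ← Real.rpow_add hM0, add_neg_cancel, Real.rpow_zero, one_mul] at this
    calc z ^ α⁻¹ * Lw ^ (-(δ/α)) ≤ z ^ α⁻¹ * (M ^ (δ/α) * Lz ^ (-(δ/α))) :=
          mul_le_mul_of_nonneg_left h3 hzp.le
      _ = M ^ (δ/α) * z ^ α⁻¹ * Lz ^ (-(δ/α)) := by ring
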